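/- In the braid group on k+1 strands (equivalently, any group with generators σ₁,…,σ_k satisfying the braid relations), the element δ_k^{k+1}, where δ_k = σ_k ⋯ σ₁, equals δ_{k−1}^k · δ_k · γ_k, where γ_k = σ₁ ⋯ σ_k. Hence a full twist plus one factor of δ_k decomposes with exactly one occurrence of σ_k outside the δ_{k−1}-part. -/
import Mathlib

/-- `deltaB σ n = σ n * σ (n-1) * ... * σ 1` (with `deltaB σ 0 = 1`). -/
def deltaB {G : Type*} [Group G] (σ : ℕ → G) (n : ℕ) : G :=
  ((List.range n).map (fun i => σ (n - i))).prod

/-- `gammaB σ n = σ 1 * σ 2 * ... * σ n` (with `gammaB σ 0 = 1`). -/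
def gammaB {G : Type*} [Group G] (σ : ℕ → G) (n : ℕ) : G :=
  ((List.range n).map (fun i => σ (i + 1))).prod

/-- `ascB σ a c = σ a * σ (a+1) * ... * σ (a+c)`. -/
def ascB {G : Type*} [Group G] (σ : ℕ → G) (a c : ℕ) : G :=
  ((List.range (c + 1)).map (fun i => σ (a + i))).prod

section Aux
variable {G : Type*} [Group G] (σ : ℕ → G)

lemma deltaB_zero : deltaB σ 0 = 1 := rfl

lemma deltaB_succ (n : ℕ) : deltaB σ (n + 1) = σ (n + 1) * deltaB σ n := by
  unfold deltaB
  rw [List.range_succ_eq_map, List.map_cons, List.prod_cons, List.map_map]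
  simp [Function.comp_def, Nat.succ_sub_succ]

lemma gammaB_succ (n : ℕ) : gammaB σ (n + 1) = gammaB σ n * σ (n + 1) := by
  unfold gammaB
  rw [List.range_succ, List.map_append, List.prod_append]
  simp

/-- shifted gamma: σ 2 * σ 3 * ... * σ (t+1) -/
def shiftG (t : ℕ) : G := ((List.range t).map (fun i => σ (i + 2))).prod

lemma shiftG_succ (t : ℕ) : shiftG σ (t + 1) = shiftG σ t * σ (t + 2) := by
  unfold shiftG
  rw [List.range_succ, List.map_append, List.prod_append]
  simp

lemma gammaB_eq_shiftG (t : ℕ) : gammaB σ (t + 1) = σ 1 * shiftG σ t := by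
  unfold gammaB shiftG
  rw [List.range_succ_eq_map, List.map_cons, List.prod_cons, List.map_map]
  congr 1

variable {k : ℕ}
variable (hcomm : ∀ i j, 1 ≤ i → i + 1 < j → j ≤ k → σ i * σ j = σ j * σ i)
variable (hbraid : ∀ i, 1 ≤ i → i + 1 ≤ k →
      σ i * σ (i + 1) * σ i = σ (i + 1) * σ i * σ (i + 1))

include hcomm in
lemma L1 : ∀ n m : ℕ, n + 2 ≤ m → m ≤ k → deltaB σ n * σ m = σ m * deltaB σ n := by
  intro n
  induction n with
  | zero => intro m _ _; simp [deltaB_zero]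
  | succ p ih =>
    intro m h1 h2
    rw [deltaB_succ, mul_assoc, ih m (by omega) h2, ← mul_assoc,
      hcomm (p + 1) m (by omega) (by omega) h2, mul_assoc]

include hcomm hbraid in
lemma L2 : ∀ n i : ℕ, 1 ≤ i → i + 1 ≤ n → n ≤ k →
    σ i * deltaB σ n = deltaB σ n * σ (i + 1) := by
  intro n
  induction n with
  | zero => intro i h1 h2 _; omega
  | succ m ih =>
    intro i h1 h2 h3
    rcases Nat.lt_or_ge (i + 1) (m + 1) with hlt | hge
    · -- i + 1 ≤ m
      rw [deltaB_succ, ← mul_assoc, hcomm i (m + 1) h1 (by omega) h3,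
        mul_assoc, ih i h1 (by omega) (by omega), ← mul_assoc]
    · -- i = m
      have him : i = m := by omega
      subst him
      obtain ⟨p, rfl⟩ : ∃ p, i = p + 1 := ⟨i - 1, by omega⟩
      rw [deltaB_succ, deltaB_succ]
      -- goal: σ (p+1) * (σ (p+2) * (σ (p+1) * δ p)) = σ (p+2) * (σ (p+1) * δ p) * σ (p+2)
      have hL1 : deltaB σ p * σ (p + 2) = σ (p + 2) * deltaB σ p :=
        L1 σ hcomm p (p + 2) (by omega) h3
      have hb := hbraid (p + 1) (by omega) h3
      calc σ (p + 1) * (σ (p + 2) * (σ (p + 1) * deltaB σ p))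
          = (σ (p + 1) * σ (p + 2) * σ (p + 1)) * deltaB σ p := by group
        _ = (σ (p + 2) * σ (p + 1) * σ (p + 2)) * deltaB σ p := by rw [hb]
        _ = σ (p + 2) * σ (p + 1) * (σ (p + 2) * deltaB σ p) := by group
        _ = σ (p + 2) * σ (p + 1) * (deltaB σ p * σ (p + 2)) := by rw [hL1]
        _ = σ (p + 2) * (σ (p + 1) * deltaB σ p) * σ (p + 2) := by group

include hcomm hbraid in
lemma L3 : ∀ m : ℕ, m + 1 ≤ k →
    deltaB σ (m + 1) * deltaB σ (m + 1) = deltaB σ m * deltaB σ (m + 1) * σ 1 := by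
  intro m
  induction m with
  | zero => intro _; simp [deltaB_succ, deltaB_zero]
  | succ p ih =>
    intro h
    have ihp := ih (by omega)
    have hL1 : deltaB σ p * σ (p + 2) = σ (p + 2) * deltaB σ p :=
      L1 σ hcomm p (p + 2) (by omega) h
    have hb := hbraid (p + 1) (by omega) h
    rw [deltaB_succ σ (p + 1)]
    calc σ (p + 2) * deltaB σ (p + 1) * (σ (p + 2) * deltaB σ (p + 1))
        = σ (p + 2) * (σ (p + 1) * (deltaB σ p * σ (p + 2))) * deltaB σ (p + 1) := by
          rw [deltaB_succ σ p]; group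
      _ = σ (p + 2) * (σ (p + 1) * (σ (p + 2) * deltaB σ p)) * deltaB σ (p + 1) := by
          rw [hL1]
      _ = (σ (p + 2) * σ (p + 1) * σ (p + 2)) * (deltaB σ p * deltaB σ (p + 1)) := by group
      _ = (σ (p + 1) * σ (p + 2) * σ (p + 1)) * (deltaB σ p * deltaB σ (p + 1)) := by
          rw [← hb]
      _ = σ (p + 1) * σ (p + 2) * (deltaB σ (p + 1) * deltaB σ (p + 1)) := by
          rw [deltaB_succ σ p]; group
      _ = σ (p + 1) * σ (p + 2) * (deltaB σ p * deltaB σ (p + 1) * σ 1) := by rw [ihp]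
      _ = σ (p + 1) * (σ (p + 2) * deltaB σ p) * (deltaB σ (p + 1) * σ 1) := by group
      _ = σ (p + 1) * (deltaB σ p * σ (p + 2)) * (deltaB σ (p + 1) * σ 1) := by rw [← hL1]
      _ = deltaB σ (p + 1) * (σ (p + 2) * deltaB σ (p + 1)) * σ 1 := by
          rw [deltaB_succ σ p]; group

include hcomm hbraid in
lemma L5 : ∀ t : ℕ, t + 1 ≤ k →
    gammaB σ t * deltaB σ k = deltaB σ k * shiftG σ t := by
  intro t
  induction t with
  | zero => intro _; simp [gammaB, shiftG]
  | succ s ih =>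
    intro h
    rw [gammaB_succ, shiftG_succ, mul_assoc,
      L2 σ hcomm hbraid k (s + 1) (by omega) (by omega) le_rfl,
      ← mul_assoc, ih (by omega), mul_assoc]

include hcomm hbraid in
lemma L4 (hk : 1 ≤ k) : ∀ t : ℕ, t ≤ k →
    deltaB σ k ^ (t + 1) = deltaB σ (k - 1) ^ t * deltaB σ k * gammaB σ t := by
  intro t
  induction t with
  | zero => intro _; simp [gammaB]
  | succ s ih =>
    intro h
    have hks : k = (k - 1) + 1 := by omega
    have h3 : deltaB σ k * deltaB σ k = deltaB σ (k - 1) * deltaB σ k * σ 1 := by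
      conv_lhs => rw [hks]
      conv_rhs => rw [hks]
      exact L3 σ hcomm hbraid (k - 1) (by omega)
    calc deltaB σ k ^ (s + 1 + 1)
        = deltaB σ k ^ (s + 1) * deltaB σ k := pow_succ _ _
      _ = deltaB σ (k - 1) ^ s * deltaB σ k * gammaB σ s * deltaB σ k := by
          rw [ih (by omega)]
      _ = deltaB σ (k - 1) ^ s * deltaB σ k * (gammaB σ s * deltaB σ k) := by group
      _ = deltaB σ (k - 1) ^ s * deltaB σ k * (deltaB σ k * shiftG σ s) := by
          rw [L5 σ hcomm hbraid s (by omega)]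
      _ = deltaB σ (k - 1) ^ s * (deltaB σ k * deltaB σ k) * shiftG σ s := by group
      _ = deltaB σ (k - 1) ^ s * (deltaB σ (k - 1) * deltaB σ k * σ 1) * shiftG σ s := by
          rw [h3]
      _ = deltaB σ (k - 1) ^ (s + 1) * deltaB σ k * (σ 1 * shiftG σ s) := by
          rw [pow_succ]; group
      _ = deltaB σ (k - 1) ^ (s + 1) * deltaB σ k * gammaB σ (s + 1) := by
          rw [gammaB_eq_shiftG]

end Aux

theorem stmt13 {G : Type*} [Group G] (σ : ℕ → G) (k : ℕ) (hk : 1 ≤ k)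
    (hcomm : ∀ i j, 1 ≤ i → i + 1 < j → j ≤ k → σ i * σ j = σ j * σ i)
    (hbraid : ∀ i, 1 ≤ i → i + 1 ≤ k →
      σ i * σ (i + 1) * σ i = σ (i + 1) * σ i * σ (i + 1)) :
    (deltaB σ k) ^ (k + 1) =
      (deltaB σ (k - 1)) ^ k * deltaB σ k * gammaB σ k := by
  exact L4 σ hcomm hbraid hk k le_rfl
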